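/- arXiv:2306.11019 — 3 statements merged into one kernel-verified Lean document; each statement's English description precedes it below -/
import Mathlib

section
/- Let ψ ∈ C_q(ℝ^d) and let conv ψ denote its convex hull, i.e. the greatest convex function on ℝ^d that is ≤ ψ. Then for every y ∈ ℝ^d, (conv ψ)(y) = inf over p ∈ 𝒫₂^y(ℝ^d) of ∫ ψ dp, and moreover conv ψ ∈ C_q(ℝ^d). -/
open MeasureTheory ProbabilityTheory Filter Set Topology
open scoped ENNReal NNReal RealInnerProductSpace

noncomputable section

abbrev Rd (d : ℕ) : Type := EuclideanSpace ℝ (Fin d)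

variable {d : ℕ}

/-- The standard Gaussian measure on `ℝ^d` (mean `0`, identity covariance). -/
def stdGauss (d : ℕ) : Measure (Rd d) :=
  (Measure.pi fun _ : Fin d => gaussianReal 0 1).map
    (MeasurableEquiv.toLp 2 (Fin d → ℝ))

/-- The Gaussian measure on `ℝ^d` with mean `η` and covariance `t • Id`. -/
def gauss (d : ℕ) (η : Rd d) (t : ℝ) : Measure (Rd d) :=
  (stdGauss d).map (fun z => η + Real.sqrt t • z)

/-- `p ∈ 𝒫₂(ℝ^d)`: Borel probability measure with finite second moment. -/
def P2 (p : Measure (Rd d)) : Prop :=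
  IsProbabilityMeasure p ∧ Integrable (fun x => ‖x‖ ^ 2) p

/-- `p ∈ 𝒫₂^x(ℝ^d)`: finite second moment and barycenter `x`. -/
def P2x (x : Rd d) (p : Measure (Rd d)) : Prop :=
  P2 p ∧ (∫ y, y ∂p) = x

/-- `q` is a coupling of `p₁` and `p₂`. -/
def IsCoupling (q : Measure (Rd d × Rd d)) (p₁ p₂ : Measure (Rd d)) : Prop :=
  q.map Prod.fst = p₁ ∧ q.map Prod.snd = p₂

/-- Maximal covariance between two measures. -/
def MCov (p₁ p₂ : Measure (Rd d)) : ℝ :=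
  sSup { r : ℝ | ∃ q : Measure (Rd d × Rd d), IsCoupling q p₁ p₂ ∧
    r = ∫ z, (inner ℝ z.1 z.2 : ℝ) ∂q }

/-- Convex order `μ ⪯_c ν`. -/
def ConvexOrder (μ ν : Measure (Rd d)) : Prop :=
  ∀ φ : Rd d → ℝ, ConvexOn ℝ univ φ → (∃ C : ℝ, ∀ y, |φ y| ≤ C * (1 + ‖y‖)) →
    (∫ y, φ y ∂μ) ≤ ∫ y, φ y ∂ν

/-- `π ∈ MT(μ,ν)`, together with a disintegration kernel `κ` (`π_x = κ x`). -/
def IsMT (μ ν : Measure (Rd d)) (π : Measure (Rd d × Rd d))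
    (κ : Kernel (Rd d) (Rd d)) : Prop :=
  IsCoupling π μ ν ∧ IsMarkovKernel κ ∧ π = μ.compProd κ ∧
    ∀ᵐ x ∂μ, (∫ y, y ∂(κ x)) = x

/-- The class `C_q(ℝ^d)` of continuous functions of quadratic growth. -/
def Cq (d : ℕ) : Set (Rd d → ℝ) :=
  { ψ | Continuous ψ ∧ ∃ a k ℓ : ℝ, ∀ y, ℓ + ‖y‖ ^ 2 / 2 ≤ ψ y ∧ ψ y ≤ a + k * ‖y‖ ^ 2 }

/-- `φ^ψ(x)` for a real-valued `ψ`. -/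
def phiR (ψ : Rd d → ℝ) (x : Rd d) : ℝ :=
  sInf { r : ℝ | ∃ p : Measure (Rd d), P2x x p ∧
    r = (∫ y, ψ y ∂p) - MCov p (stdGauss d) }

/-- The dual value `D̃(μ,ν)`. -/
def Dtilde (μ ν : Measure (Rd d)) : ℝ :=
  sInf { r : ℝ | ∃ ψ ∈ Cq d, r = (∫ y, ψ y ∂ν) - ∫ x, phiR ψ x ∂μ }

/-- The primal value `P(μ,ν)`. -/
def Pval (μ ν : Measure (Rd d)) : ℝ :=
  sSup { r : ℝ | ∃ (π : Measure (Rd d × Rd d)) (κ : Kernel (Rd d) (Rd d)),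
    IsMT μ ν π κ ∧ r = ∫ x, MCov (κ x) (stdGauss d) ∂μ }

/-! ### Extended-real-valued machinery -/

/-- Positive part of an extended real, as an extended nonnegative real. -/
def ePos (x : EReal) : ℝ≥0∞ := if x = ⊤ then ⊤ else ENNReal.ofReal x.toReal

/-- Extended integral of an `EReal`-valued function. -/
def eInt (p : Measure (Rd d)) (f : Rd d → EReal) : EReal :=
  ((∫⁻ x, ePos (f x) ∂p : ℝ≥0∞) : EReal) - ((∫⁻ x, ePos (-(f x)) ∂p : ℝ≥0∞) : EReal)

/-- Convexity on a set for `EReal`-valued functions. -/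
def ERealConvexOn (s : Set (Rd d)) (f : Rd d → EReal) : Prop :=
  ∀ x ∈ s, ∀ y ∈ s, ∀ a b : ℝ, 0 ≤ a → 0 ≤ b → a + b = 1 →
    f (a • x + b • y) ≤ (a : EReal) * f x + (b : EReal) * f y

/-- Convexity for `EReal`-valued functions. -/
def ERealConvex (f : Rd d → EReal) : Prop := ERealConvexOn univ f

/-- Domain of an `EReal`-valued function (the set where it is `< +∞`). -/
def edom (f : Rd d → EReal) : Set (Rd d) := { x | f x ≠ ⊤ }

/-- Convex conjugate of an `EReal`-valued function. -/
def eConj (f : Rd d → EReal) (y : Rd d) : EReal :=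
  ⨆ x : Rd d, ((inner ℝ x y : ℝ) : EReal) - f x

/-- Convex conjugate of a real-valued function. -/
def rConj (f : Rd d → ℝ) (y : Rd d) : EReal :=
  ⨆ x : Rd d, (((inner ℝ x y : ℝ) - f x : ℝ) : EReal)

/-- `φ^ψ(x)` for an `EReal`-valued `ψ`. -/
def phiE (ψ : Rd d → EReal) (x : Rd d) : EReal :=
  sInf { r : EReal | ∃ p : Measure (Rd d), P2x x p ∧
    r = eInt p ψ - ((MCov p (stdGauss d) : ℝ) : EReal) }

/-- The relaxed dual functional `𝒟(ψ)` relative to a disintegration kernel `κ`. -/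
def Dfun (μ : Measure (Rd d)) (κ : Kernel (Rd d) (Rd d)) (ψ : Rd d → EReal) : ℝ≥0∞ :=
  ∫⁻ x, ePos (eInt (κ x) ψ - phiE ψ x) ∂μ

/-- Convolution of an `EReal`-valued function with the standard Gaussian. -/
def gConv (f : Rd d → EReal) (x : Rd d) : EReal :=
  eInt (stdGauss d) (fun z => f (x + z))

/-- Convolution of a real-valued function with the standard Gaussian. -/
def gConvR (f : Rd d → ℝ) (x : Rd d) : ℝ := ∫ z, f (x + z) ∂(stdGauss d)

/-- The relaxed dual functional `ℰ(ψ)` relative to a disintegration kernel `κ`. -/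
def Efun (μ : Measure (Rd d)) (κ : Kernel (Rd d) (Rd d)) (ψ : Rd d → EReal) : ℝ≥0∞ :=
  ∫⁻ x, ePos (eInt (κ x) ψ - eConj (gConv (eConj ψ)) x) ∂μ

/-- Convolution of two measures on `ℝ^d`. -/
def mconv (α β : Measure (Rd d)) : Measure (Rd d) :=
  (α.prod β).map (fun p => p.1 + p.2)

/-- Support of a measure. -/
def msupp (p : Measure (Rd d)) : Set (Rd d) :=
  { x | ∀ U : Set (Rd d), IsOpen U → x ∈ U → 0 < p U }

/-- Closed convex hull of a set. -/
def cch (s : Set (Rd d)) : Set (Rd d) := closure (convexHull ℝ s)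

/-- Bass data `(v, α)` from `μ` to `ν`. -/
def IsBassData (μ ν : Measure (Rd d)) (v : Rd d → ℝ) (α : Measure (Rd d)) : Prop :=
  ConvexOn ℝ univ v ∧ IsProbabilityMeasure α ∧
  Integrable (fun x => ‖gradient v x‖ ^ 2) (mconv α (stdGauss d)) ∧
  (mconv α (stdGauss d)).map (gradient v) = ν ∧
  α.map (fun ζ => ∫ z, gradient v (ζ + z) ∂(stdGauss d)) = μ

/-- A dual optimizer in the sense of Definition 6.1. -/
def IsDualOptimizer (μ ν : Measure (Rd d)) (ψ : Rd d → EReal) : Prop :=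
  LowerSemicontinuous ψ ∧ ERealConvex ψ ∧ (∀ x, ψ x ≠ ⊥) ∧
  μ (intrinsicInterior ℝ (edom ψ)) = 1 ∧
  ∀ (π : Measure (Rd d × Rd d)) (κ : Kernel (Rd d) (Rd d)), IsMT μ ν π κ →
    ((Dtilde μ ν : ℝ) : EReal) = ((Dfun μ κ ψ : ℝ≥0∞) : EReal)

/-- De March–Touzi irreducibility of the pair `(μ,ν)`. -/
def DMTIrred (μ ν : Measure (Rd d)) : Prop :=
  μ (intrinsicInterior ℝ (cch (msupp ν))) = 1 ∧
  ∃ (π : Measure (Rd d × Rd d)) (κ : Kernel (Rd d) (Rd d)), IsMT μ ν π κ ∧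
    ∀ᵐ x ∂μ, cch (msupp (κ x)) = cch (msupp ν)

/-- Irreducibility of the pair `(μ,ν)`. -/
def Irred (μ ν : Measure (Rd d)) : Prop :=
  ∀ A B : Set (Rd d), MeasurableSet A → MeasurableSet B → 0 < μ A → 0 < ν B →
    ∃ (π : Measure (Rd d × Rd d)) (κ : Kernel (Rd d) (Rd d)), IsMT μ ν π κ ∧
      0 < π (A ×ˢ B)

/-- Real-valued representative of `ψ*`. -/
def vOf (ψ : Rd d → EReal) (y : Rd d) : ℝ := (eConj ψ y).toReal

/-- The map `ζ = ∇(v ∗ γ)*` associated with a dual optimizer `ψ` (with `v = ψ*`). -/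
def zetaOf (ψ : Rd d → EReal) (x : Rd d) : Rd d :=
  gradient (fun x' => (rConj (gConvR (vOf ψ)) x').toReal) x

/-- (An a.e. representative of) `∇ψ*`. -/
def gradStar (ψ : Rd d → EReal) (z : Rd d) : Rd d :=
  gradient (fun y => (eConj ψ y).toReal) z

/-- Subdifferential of an `EReal`-valued function at a point. -/
def subdiffE (g : Rd d → EReal) (z : Rd d) : Set (Rd d) :=
  { u | ∀ y, g z + ((inner ℝ u (y - z) : ℝ) : EReal) ≤ g y }

/-- The dual function `ζ ↦ ⟨ζ,x⟩ − ∫ ψ*(ζ+z) dγ(z)`. -/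
def gdual (ψ : Rd d → EReal) (x ζ : Rd d) : EReal :=
  ((inner ℝ ζ x : ℝ) : EReal) - eInt (stdGauss d) (fun z => eConj ψ (ζ + z))

end

/-! Jensen's inequality gives `χ y ≤ ∫ χ dp ≤ ∫ ψ dp` for every `p ∈ 𝒫₂^y`, and the Dirac mass
at `y` shows that the infimum is at most `ψ y`. The infimum is itself convex, because mixing
measures with barycenters `y₁, y₂` gives a measure whose barycenter is the same convex
combination of `y₁, y₂`; maximality of `χ` then gives the reverse inequality. Finally `χ ∈ C_q`:
it lies below `ψ`, and above the convex minorant `ℓ + |y|²/2` of `ψ`. -/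

open scoped Pointwise

section Mixtures

variable {α : Type*} [MeasurableSpace α] {μ ν : Measure α} {a b : ℝ}

theorem isProbabilityMeasure_ofReal_smul_add_ofReal_smul [IsProbabilityMeasure μ]
    [IsProbabilityMeasure ν] (ha : 0 ≤ a) (hb : 0 ≤ b) (hab : a + b = 1) :
    IsProbabilityMeasure (ENNReal.ofReal a • μ + ENNReal.ofReal b • ν) := by
  constructor
  simp only [Measure.add_apply, Measure.smul_apply, measure_univ, smul_eq_mul, mul_one]
  rw [← ENNReal.ofReal_add ha hb, hab, ENNReal.ofReal_one]

theorem MeasureTheory.Integrable.ofReal_smul_add_ofReal_smul {E : Type*} [NormedAddCommGroup E]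
    {f : α → E} (hμ : Integrable f μ) (hν : Integrable f ν) :
    Integrable f (ENNReal.ofReal a • μ + ENNReal.ofReal b • ν) :=
  (hμ.smul_measure ENNReal.ofReal_ne_top).add_measure (hν.smul_measure ENNReal.ofReal_ne_top)

theorem integral_ofReal_smul_add_ofReal_smul {E : Type*} [NormedAddCommGroup E]
    [NormedSpace ℝ E] {f : α → E} (hμ : Integrable f μ) (hν : Integrable f ν)
    (ha : 0 ≤ a) (hb : 0 ≤ b) :
    ∫ x, f x ∂(ENNReal.ofReal a • μ + ENNReal.ofReal b • ν) =
      a • ∫ x, f x ∂μ + b • ∫ x, f x ∂ν := by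
  rw [integral_add_measure (hμ.smul_measure ENNReal.ofReal_ne_top)
      (hν.smul_measure ENNReal.ofReal_ne_top),
    integral_smul_measure, integral_smul_measure, ENNReal.toReal_ofReal ha,
    ENNReal.toReal_ofReal hb]

end Mixtures

theorem convexOn_univ_sInf_of_smul_add_smul_subset {E : Type*} [AddCommGroup E] [Module ℝ E]
    {S : E → Set ℝ} (hne : ∀ y, (S y).Nonempty) (hbdd : ∀ y, BddBelow (S y))
    (hmix : ∀ y₁ y₂ : E, ∀ a b : ℝ, 0 ≤ a → 0 ≤ b → a + b = 1 →
      a • S y₁ + b • S y₂ ⊆ S (a • y₁ + b • y₂)) :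
    ConvexOn ℝ univ fun y => sInf (S y) := by
  refine ⟨convex_univ, fun y₁ _ y₂ _ a b ha hb hab => ?_⟩
  calc sInf (S (a • y₁ + b • y₂))
      ≤ sInf (a • S y₁ + b • S y₂) :=
        csInf_le_csInf (hbdd _) ((hne y₁).smul_set.add (hne y₂).smul_set)
          (hmix y₁ y₂ a b ha hb hab)
    _ = a • sInf (S y₁) + b • sInf (S y₂) := by
        rw [csInf_add (hne y₁).smul_set ((hbdd y₁).smul_of_nonneg ha) (hne y₂).smul_set
          ((hbdd y₂).smul_of_nonneg hb), Real.sInf_smul_of_nonneg ha,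
          Real.sInf_smul_of_nonneg hb]

theorem convexOn_univ_const_add_sq_norm_div_two {E : Type*} [NormedAddCommGroup E]
    [NormedSpace ℝ E] (ℓ : ℝ) : ConvexOn ℝ univ fun y : E => ℓ + ‖y‖ ^ 2 / 2 := by
  have hsq : ConvexOn ℝ univ fun y : E => ‖y‖ ^ 2 :=
    convexOn_univ_norm.pow (fun y _ => norm_nonneg y) 2
  refine ((hsq.smul (by norm_num : (0 : ℝ) ≤ 1 / 2)).add_const ℓ).congr fun y _ => ?_
  simp only [Pi.add_apply, smul_eq_mul]
  ring

section Barycentric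

variable {d : ℕ}

def baryValues (ψ : Rd d → ℝ) (y : Rd d) : Set ℝ :=
  { r | ∃ p : Measure (Rd d), P2x y p ∧ r = ∫ z, ψ z ∂p }

theorem P2.integrable_id {p : Measure (Rd d)} (hp : P2 p) : Integrable (fun z => z) p := by
  have := hp.1
  exact ((memLp_two_iff_integrable_sq_norm aestronglyMeasurable_id).2 hp.2).integrable
    one_le_two

theorem P2.integrable_of_abs_le {p : Measure (Rd d)} (hp : P2 p) {g : Rd d → ℝ}
    (hg : AEStronglyMeasurable g p) {C K : ℝ} (hbound : ∀ z, |g z| ≤ C + K * ‖z‖ ^ 2) :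
    Integrable g p := by
  have := hp.1
  exact ((integrable_const C).add (hp.2.const_mul K)).mono' hg (ae_of_all _ hbound)

theorem abs_le_of_mem_Cq {ψ : Rd d → ℝ} (hψ : ψ ∈ Cq d) :
    ∃ C K : ℝ, ∀ z, |ψ z| ≤ C + K * ‖z‖ ^ 2 := by
  obtain ⟨-, a, k, ℓ, hbounds⟩ := hψ
  refine ⟨|a| + |ℓ|, |k|, fun z => abs_le.2 ⟨?_, ?_⟩⟩
  · nlinarith [(hbounds z).1, neg_abs_le ℓ, abs_nonneg a, abs_nonneg k, sq_nonneg ‖z‖]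
  · nlinarith [(hbounds z).2, le_abs_self a, le_abs_self k, abs_nonneg ℓ, sq_nonneg ‖z‖]

theorem integrable_of_mem_Cq {ψ : Rd d → ℝ} (hψ : ψ ∈ Cq d) {p : Measure (Rd d)}
    (hp : P2 p) :
    Integrable ψ p :=
  have ⟨_, _, hbound⟩ := abs_le_of_mem_Cq hψ
  hp.integrable_of_abs_le hψ.1.aestronglyMeasurable hbound

theorem p2x_dirac (y : Rd d) : P2x y (Measure.dirac y) :=
  ⟨⟨inferInstance, integrable_dirac (by simp)⟩, integral_dirac _ y⟩

theorem P2x.ofReal_smul_add_ofReal_smul {y₁ y₂ : Rd d} {p₁ p₂ : Measure (Rd d)}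
    (hp₁ : P2x y₁ p₁) (hp₂ : P2x y₂ p₂) {a b : ℝ} (ha : 0 ≤ a) (hb : 0 ≤ b)
    (hab : a + b = 1) :
    P2x (a • y₁ + b • y₂) (ENNReal.ofReal a • p₁ + ENNReal.ofReal b • p₂) := by
  have := hp₁.1.1
  have := hp₂.1.1
  refine ⟨⟨isProbabilityMeasure_ofReal_smul_add_ofReal_smul ha hb hab,
    Integrable.ofReal_smul_add_ofReal_smul hp₁.1.2 hp₂.1.2⟩, ?_⟩
  rw [integral_ofReal_smul_add_ofReal_smul hp₁.1.integrable_id hp₂.1.integrable_id ha hb,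
    hp₁.2, hp₂.2]

theorem apply_mem_baryValues (ψ : Rd d → ℝ) (y : Rd d) : ψ y ∈ baryValues ψ y :=
  ⟨_, p2x_dirac y, (integral_dirac ψ y).symm⟩

theorem bddBelow_baryValues {ψ : Rd d → ℝ} (hψ : ψ ∈ Cq d) (y : Rd d) :
    BddBelow (baryValues ψ y) := by
  obtain ⟨_, _, ℓ, hbounds⟩ := hψ.2
  refine ⟨ℓ, ?_⟩
  rintro _ ⟨p, hp, rfl⟩
  have := hp.1.1
  calc ℓ = ∫ _, ℓ ∂p := by simp
    _ ≤ ∫ z, ψ z ∂p := integral_mono (integrable_const ℓ) (integrable_of_mem_Cq hψ hp.1)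
        fun z => (le_add_of_nonneg_right (by positivity)).trans (hbounds z).1

theorem smul_add_smul_baryValues_subset {ψ : Rd d → ℝ} (hψ : ψ ∈ Cq d) {y₁ y₂ : Rd d}
    {a b : ℝ} (ha : 0 ≤ a) (hb : 0 ≤ b) (hab : a + b = 1) :
    a • baryValues ψ y₁ + b • baryValues ψ y₂ ⊆ baryValues ψ (a • y₁ + b • y₂) := by
  rintro _ ⟨_, ⟨_, ⟨p₁, hp₁, rfl⟩, rfl⟩, _, ⟨_, ⟨p₂, hp₂, rfl⟩, rfl⟩, rfl⟩
  refine ⟨_, hp₁.ofReal_smul_add_ofReal_smul hp₂ ha hb hab, ?_⟩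
  rw [integral_ofReal_smul_add_ofReal_smul (integrable_of_mem_Cq hψ hp₁.1)
    (integrable_of_mem_Cq hψ hp₂.1) ha hb]

theorem convexOn_sInf_baryValues {ψ : Rd d → ℝ} (hψ : ψ ∈ Cq d) :
    ConvexOn ℝ univ fun y => sInf (baryValues ψ y) :=
  convexOn_univ_sInf_of_smul_add_smul_subset (fun y => ⟨_, apply_mem_baryValues ψ y⟩)
    (bddBelow_baryValues hψ) fun _ _ _ _ ha hb hab =>
      smul_add_smul_baryValues_subset hψ ha hb hab

theorem ConvexOn.le_integral_of_p2x {χ : Rd d → ℝ} (hχ : ConvexOn ℝ univ χ) (hχq : χ ∈ Cq d)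
    {y : Rd d} {p : Measure (Rd d)} (hp : P2x y p) : χ y ≤ ∫ z, χ z ∂p := by
  have := hp.1.1
  simpa [hp.2] using hχ.map_integral_le hχq.1.continuousOn isClosed_univ
    (ae_of_all _ fun _ => mem_univ _) hp.1.integrable_id (integrable_of_mem_Cq hχq hp.1)

theorem mem_Cq_of_greatest_convex_minorant {ψ χ : Rd d → ℝ} (hψ : ψ ∈ Cq d)
    (hχconv : ConvexOn ℝ univ χ) (hχle : ∀ y, χ y ≤ ψ y)
    (hχmax : ∀ g : Rd d → ℝ, ConvexOn ℝ univ g → (∀ y, g y ≤ ψ y) → ∀ y, g y ≤ χ y) :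
    χ ∈ Cq d := by
  obtain ⟨-, a, k, ℓ, hbounds⟩ := hψ
  refine ⟨continuousOn_univ.mp (hχconv.continuousOn isOpen_univ), a, k, ℓ,
    fun y => ⟨?_, ?_⟩⟩
  · exact hχmax _ (convexOn_univ_const_add_sq_norm_div_two ℓ) (fun z => (hbounds z).1) y
  · exact (hχle y).trans (hbounds y).2

end Barycentric

theorem stmt1_general {d : ℕ} (ψ χ : Rd d → ℝ) (hψ : ψ ∈ Cq d)
    (hχconv : ConvexOn ℝ univ χ) (hχle : ∀ y, χ y ≤ ψ y)
    (hχmax : ∀ g : Rd d → ℝ, ConvexOn ℝ univ g → (∀ y, g y ≤ ψ y) → ∀ y, g y ≤ χ y) :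
    (∀ y : Rd d, χ y =
      sInf { r : ℝ | ∃ p : Measure (Rd d), P2x y p ∧ r = ∫ z, ψ z ∂p }) ∧
    χ ∈ Cq d := by
  have hχ : χ ∈ Cq d := mem_Cq_of_greatest_convex_minorant hψ hχconv hχle hχmax
  have hle : ∀ y, χ y ≤ sInf (baryValues ψ y) := fun y =>
    le_csInf ⟨_, apply_mem_baryValues ψ y⟩ fun _ ⟨p, hp, hr⟩ =>
      hr ▸ (hχconv.le_integral_of_p2x hχ hp).trans
        (integral_mono (integrable_of_mem_Cq hχ hp.1) (integrable_of_mem_Cq hψ hp.1) hχle)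
  have hge : ∀ y, sInf (baryValues ψ y) ≤ χ y :=
    hχmax _ (convexOn_sInf_baryValues hψ) fun y =>
      csInf_le (bddBelow_baryValues hψ y) (apply_mem_baryValues ψ y)
  exact ⟨fun y => (hle y).antisymm (hge y), hχ⟩

/-- **The convex hull of `ψ ∈ C_q` via barycentric minimization.** -/
theorem stmt1 {d : ℕ} (hd : 1 ≤ d) (ψ χ : Rd d → ℝ) (hψ : ψ ∈ Cq d)
    (hχconv : ConvexOn ℝ univ χ) (hχle : ∀ y, χ y ≤ ψ y)
    (hχmax : ∀ g : Rd d → ℝ, ConvexOn ℝ univ g → (∀ y, g y ≤ ψ y) → ∀ y, g y ≤ χ y) :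
    (∀ y : Rd d, χ y =
      sInf { r : ℝ | ∃ p : Measure (Rd d), P2x y p ∧ r = ∫ z, ψ z ∂p }) ∧
    χ ∈ Cq d :=
  stmt1_general ψ χ hψ hχconv hχle hχmax
end

section
/- Assume the support of ν affinely spans ℝ^d and that (μ,ν) is De March–Touzi irreducible with witness π^DMT ∈ MT(μ,ν). Then for μ-a.e. x ∈ ℝ^d and every compact set K ⊆ I there exists a constant δ(K,x) > 0 such that π^DMT_x(S_{y*}) ≥ δ(K,x) for every unit vector y* ∈ S^{d−1}, where S_{y*} := { y ∈ C : ⟨y,y*⟩ > sup{⟨ỹ,y*⟩ : ỹ ∈ K} } is the slice of C beyond K in direction y*. -/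
open MeasureTheory ProbabilityTheory Filter Set Topology
open scoped ENNReal NNReal RealInnerProductSpace

/-!
Fix `x` with `cch (msupp (κ x)) = C := cch (msupp ν)`. Since `msupp ν` spans the whole space,
`K` lies in the interior of `C`, so for every unit vector `u` some point `y₀` of the support of
`κ x` lies strictly beyond `K` in direction `u`. The support function of a compact set is
continuous, hence a whole rectangle `V × W` around `(u, y₀)` satisfies
`supportFunction K u' < ⟪y, u'⟫`, and `κ x W > 0` bounds the mass of every slice with direction
in `V`. Compactness of the unit sphere makes these local bounds uniform.
-/

section InnerProductSpace

variable {E : Type*} [NormedAddCommGroup E] [InnerProductSpace ℝ E]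

noncomputable def supportFunction (K : Set E) (u : E) : EReal := ⨆ w ∈ K, ((⟪w, u⟫ : ℝ) : EReal)

theorem IsCompact.continuous_supportFunction {K : Set E} (hK : IsCompact K) :
    Continuous (supportFunction K) := by
  have h := hK.continuous_sSup (f := fun u w => ((⟪w, u⟫ : ℝ) : EReal))
    (continuous_coe_real_ereal.comp (by fun_prop))
  simp only [sSup_image] at h
  exact h

theorem closure_convexHull_subset_setOf_inner_le {s : Set E} {u : E} {c : ℝ}
    (h : ∀ y ∈ s, ⟪y, u⟫ ≤ c) : closure (convexHull ℝ s) ⊆ {y | ⟪y, u⟫ ≤ c} := by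
  have hlin : IsLinearMap ℝ fun y : E => ⟪y, u⟫ :=
    ⟨fun a b => inner_add_left a b u, fun c a => real_inner_smul_left a u c⟩
  exact closure_minimal (convexHull_min h (convex_halfSpace_le hlin c))
    (isClosed_le (by fun_prop) continuous_const)

theorem exists_inner_lt_of_mem_interior_closure_convexHull {s : Set E} {w u : E}
    (hw : w ∈ interior (closure (convexHull ℝ s))) (hu : u ≠ 0) :
    ∃ y ∈ s, ⟪w, u⟫ < ⟪y, u⟫ := by
  by_contra! hs
  have hpath : Tendsto (fun t : ℝ => w + t • u) (𝓝[>] 0) (𝓝 w) := by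
    have h : Continuous fun t : ℝ => w + t • u := by fun_prop
    simpa using (h.tendsto 0).mono_left nhdsWithin_le_nhds
  obtain ⟨t, ht_mem, ht_pos⟩ :=
    ((hpath.eventually (mem_interior_iff_mem_nhds.mp hw)).and self_mem_nhdsWithin).exists
  have hle : ⟪w + t • u, u⟫ ≤ ⟪w, u⟫ := closure_convexHull_subset_setOf_inner_le hs ht_mem
  rw [inner_add_left, real_inner_smul_left, real_inner_self_eq_norm_sq] at hle
  have : 0 < t * ‖u‖ ^ 2 := mul_pos ht_pos (by positivity)
  linarith

theorem exists_supportFunction_lt_inner {s K : Set E} (hK : IsCompact K)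
    (hKs : K ⊆ interior (closure (convexHull ℝ s)))
    (hs : (interior (closure (convexHull ℝ s))).Nonempty) {u : E} (hu : u ≠ 0) :
    ∃ y ∈ s, supportFunction K u < ⟪y, u⟫ := by
  obtain ⟨w, hw, hKw⟩ : ∃ w ∈ interior (closure (convexHull ℝ s)),
      supportFunction K u ≤ ⟪w, u⟫ := by
    rcases K.eq_empty_or_nonempty with rfl | hKne
    · obtain ⟨w, hw⟩ := hs
      exact ⟨w, hw, by simp [supportFunction]⟩
    obtain ⟨w, hwK, hwmax⟩ :=
      hK.exists_isMaxOn hKne (by fun_prop : Continuous fun w => ⟪w, u⟫).continuousOn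
    exact ⟨w, hKs hwK, iSup₂_le fun w' hw' => EReal.coe_le_coe_iff.mpr (hwmax hw')⟩
  obtain ⟨y, hys, hwy⟩ := exists_inner_lt_of_mem_interior_closure_convexHull hw hu
  exact ⟨y, hys, hKw.trans_lt (EReal.coe_lt_coe_iff.mpr hwy)⟩

end InnerProductSpace

theorem intrinsicInterior_subset_interior_of_affineSpan_eq_top {E : Type*}
    [NormedAddCommGroup E] [NormedSpace ℝ E] {s : Set E} (h : affineSpan ℝ s = ⊤) :
    intrinsicInterior ℝ s ⊆ interior s := by
  have hopen : IsOpen (affineSpan ℝ s : Set E) := by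
    rw [h, AffineSubspace.top_coe]
    exact isOpen_univ
  exact interior_maximal intrinsicInterior_subset
    (hopen.isOpenEmbedding_subtypeVal.isOpenMap _ isOpen_interior)

theorem IsCompact.exists_pos_forall_ofReal_le {X : Type*} [TopologicalSpace X] {s : Set X}
    (hs : IsCompact s) {f : X → ℝ≥0∞}
    (h : ∀ x ∈ s, ∃ δ > 0, ∀ᶠ y in 𝓝 x, ENNReal.ofReal δ ≤ f y) :
    ∃ δ > 0, ∀ x ∈ s, ENNReal.ofReal δ ≤ f x := by
  refine hs.induction_on ⟨1, one_pos, by simp⟩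
    (fun s t hst ⟨δ, hδ, ht⟩ => ⟨δ, hδ, fun x hx => ht x (hst hx)⟩) ?_ ?_
  · rintro s t ⟨δ, hδ, hs⟩ ⟨δ', hδ', ht⟩
    refine ⟨min δ δ', lt_min hδ hδ', fun x hx => ?_⟩
    rcases hx with hx | hx
    · exact (ENNReal.ofReal_le_ofReal (min_le_left _ _)).trans (hs x hx)
    · exact (ENNReal.ofReal_le_ofReal (min_le_right _ _)).trans (ht x hx)
  · intro x hx
    obtain ⟨δ, hδ, hev⟩ := h x hx
    exact ⟨_, mem_nhdsWithin_of_mem_nhds hev, δ, hδ, fun y hy => hy⟩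

section Support

variable {d : ℕ}

theorem subset_cch (s : Set (Rd d)) : s ⊆ cch s :=
  subset_closure.trans' (subset_convexHull ℝ s)

theorem measure_compl_msupp (p : Measure (Rd d)) : p (msupp p)ᶜ = 0 := by
  obtain ⟨b, hbc, -, hb⟩ := TopologicalSpace.exists_countable_basis (Rd d)
  refine measure_mono_null (fun x hx => ?_)
    ((measure_sUnion_null_iff (hbc.mono (Set.sep_subset _ _))).2 fun V hV => hV.2)
  simp only [mem_compl_iff, msupp, mem_ofPred_eq, not_forall, not_lt, nonpos_iff_eq_zero] at hx
  obtain ⟨U, hUo, hxU, hU0⟩ := hx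
  obtain ⟨V, hVb, hxV, hVU⟩ := hb.exists_subset_of_mem_open hxU hUo
  exact ⟨V, ⟨hVb, measure_mono_null hVU hU0⟩, hxV⟩

theorem exists_pos_eventually_le_measure_slice (p : Measure (Rd d)) {K : Set (Rd d)}
    (hK : IsCompact K) (hKs : K ⊆ interior (cch (msupp p)))
    (hs : (interior (cch (msupp p))).Nonempty) {u : Rd d} (hu : u ≠ 0) :
    ∃ δ > 0, ∀ᶠ u' in 𝓝 u, ENNReal.ofReal δ ≤
      p {y ∈ cch (msupp p) | supportFunction K u' < ⟪y, u'⟫} := by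
  obtain ⟨y₀, hy₀, hKy₀⟩ := exists_supportFunction_lt_inner hK hKs hs hu
  have hopen : IsOpen {q : Rd d × Rd d | supportFunction K q.1 < ⟪q.2, q.1⟫} :=
    isOpen_lt (hK.continuous_supportFunction.comp continuous_fst)
      (continuous_coe_real_ereal.comp (by fun_prop))
  obtain ⟨V, W, hV, hW, huV, hy₀W, hVW⟩ := isOpen_prod_iff.mp hopen u y₀ hKy₀
  obtain ⟨δ, -, hδ, hδW⟩ := ENNReal.lt_iff_exists_real_btwn.mp (hy₀ W hW hy₀W)
  refine ⟨δ, ENNReal.ofReal_pos.mp hδ, ?_⟩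
  filter_upwards [hV.mem_nhds huV] with u' hu'
  have hnull : p (cch (msupp p))ᶜ = 0 :=
    measure_mono_null (compl_subset_compl.mpr (subset_cch _)) (measure_compl_msupp p)
  calc ENNReal.ofReal δ ≤ p W := hδW.le
    _ ≤ p {y | supportFunction K u' < ⟪y, u'⟫} :=
      measure_mono fun y hy => by simpa using hVW (mk_mem_prod hu' hy)
    _ = p {y ∈ cch (msupp p) | supportFunction K u' < ⟪y, u'⟫} := by
      rw [← measure_inter_conull hnull, inter_comm, inter_def]
      simp only [mem_ofPred_eq]

end Support

theorem stmt14_general {d : ℕ} (μ ν : Measure (Rd d)) (hspan : affineSpan ℝ (msupp ν) = ⊤)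
    (κ : Kernel (Rd d) (Rd d))
    (hDMT : ∀ᵐ x ∂μ, cch (msupp (κ x)) = cch (msupp ν)) :
    ∀ᵐ x ∂μ, ∀ K : Set (Rd d), K ⊆ intrinsicInterior ℝ (cch (msupp ν)) →
      IsCompact K → ∃ δ : ℝ, 0 < δ ∧ ∀ u : Rd d, ‖u‖ = 1 →
        ENNReal.ofReal δ ≤ κ x { y ∈ cch (msupp ν) |
          (⨆ w ∈ K, ((inner ℝ w u : ℝ) : EReal)) < ((inner ℝ y u : ℝ) : EReal) } := by
  have hCspan : affineSpan ℝ (cch (msupp ν)) = ⊤ :=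
    top_le_iff.mp (hspan ▸ affineSpan_mono ℝ (subset_cch _))
  have hCint : (interior (cch (msupp ν))).Nonempty :=
    (convex_convexHull ℝ _).closure.interior_nonempty_iff_affineSpan_eq_top.mpr hCspan
  filter_upwards [hDMT] with x hx K hKI hK
  have hKint := hKI.trans (intrinsicInterior_subset_interior_of_affineSpan_eq_top hCspan)
  rw [← hx] at hKint hCint ⊢
  have hlocal := fun u (hu : u ∈ Metric.sphere (0 : Rd d) 1) =>
    exists_pos_eventually_le_measure_slice (κ x) hK hKint hCint
      (ne_zero_of_mem_unit_sphere ⟨u, hu⟩)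
  obtain ⟨δ, hδ, hle⟩ := (isCompact_sphere (0 : Rd d) 1).exists_pos_forall_ofReal_le hlocal
  exact ⟨δ, hδ, fun u hu => hle u (mem_sphere_zero_iff_norm.mpr hu)⟩

/-- **Uniform mass of slices beyond compact subsets of `I` (Lemma 7.5).** -/
theorem stmt14 {d : ℕ} (hd : 1 ≤ d) (μ ν : Measure (Rd d)) (hμ : P2 μ) (hν : P2 ν)
    (hco : ConvexOrder μ ν) (hspan : affineSpan ℝ (msupp ν) = ⊤)
    (π : Measure (Rd d × Rd d)) (κ : Kernel (Rd d) (Rd d)) (hπ : IsMT μ ν π κ)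
    (hI : μ (intrinsicInterior ℝ (cch (msupp ν))) = 1)
    (hDMT : ∀ᵐ x ∂μ, cch (msupp (κ x)) = cch (msupp ν)) :
    ∀ᵐ x ∂μ, ∀ K : Set (Rd d), K ⊆ intrinsicInterior ℝ (cch (msupp ν)) →
      IsCompact K → ∃ δ : ℝ, 0 < δ ∧ ∀ u : Rd d, ‖u‖ = 1 →
        ENNReal.ofReal δ ≤ κ x { y ∈ cch (msupp ν) |
          (⨆ w ∈ K, ((inner ℝ w u : ℝ) : EReal)) < ((inner ℝ y u : ℝ) : EReal) } :=
  stmt14_general μ ν hspan κ hDMT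
end

section
/- For every sequence (ψ_n)_{n≥1} of lower semicontinuous convex functions ψ_n : ℝ^d → [0,+∞) there exist a closed convex set C_lim ⊆ ℝ^d with relative interior I_lim and a subsequence (ψ_{n_k})_{k≥1} such that: for every y ∈ I_lim the limit ψ_lim(y) := lim_{k→∞} ψ_{n_k}(y) exists and is finite, the convergence being uniform on compact subsets of I_lim, and for every y ∈ ℝ^d \ C_lim one has lim_{k→∞} ψ_{n_k}(y) = +∞. -/
open MeasureTheory ProbabilityTheory Filter Set Topology
open scoped ENNReal NNReal RealInnerProductSpace

/-! A diagonal extraction over a countable basis `(U j)` of `ℝ^d` yields a subsequence such that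
each `U j` either contains a point where the subsequence stays bounded or consists of points
where it tends to `+∞`. Hence it diverges off the closure `C` of the set `A` of points where it
stays bounded, and `A` is convex by convexity of the `ψ n`. A second diagonal extraction gives
convergence on a countable dense subset of `A`. Restricted to the affine span of `C`, every point
of `ri C` is surrounded by a simplex with vertices in `A`, on which the functions are uniformly
bounded, hence equi-Lipschitz on a smaller ball; so convergence on the dense subset propagates to
locally uniform convergence on `ri C`. -/

theorem exists_strictMono_forall_of_subseq {ι : Type*} [Countable ι]
    {Q : ι → Filter ℕ → Prop} (hQ : ∀ i ⦃F G : Filter ℕ⦄, F ≤ G → Q i G → Q i F)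
    (hsubseq : ∀ i (σ : ℕ → ℕ), StrictMono σ →
      ∃ ρ : ℕ → ℕ, StrictMono ρ ∧ Q i (map (σ ∘ ρ) atTop)) :
    ∃ τ : ℕ → ℕ, StrictMono τ ∧ ∀ i, Q i (map τ atTop) := by
  obtain ⟨e, he⟩ := Countable.exists_injective_nat ι
  have hsubseq' : ∀ (n : ℕ) (σ : ℕ → ℕ), StrictMono σ →
      ∃ ρ : ℕ → ℕ, StrictMono ρ ∧ ∀ i, e i = n → Q i (map (σ ∘ ρ) atTop) := by
    intro n σ hσ
    by_cases hn : ∃ i, e i = n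
    · obtain ⟨i, rfl⟩ := hn
      obtain ⟨ρ, hρ, hQρ⟩ := hsubseq i σ hσ
      exact ⟨ρ, hρ, fun j hj => he hj ▸ hQρ⟩
    · exact ⟨id, strictMono_id, fun i hi => absurd ⟨i, hi⟩ hn⟩
  choose ρ hρ hQρ using hsubseq'
  -- `σ n` is the `n`-th nested subsequence; the answer is the diagonal `k ↦ σ k k`
  let σ : ℕ → {σ : ℕ → ℕ // StrictMono σ} := fun n =>
    Nat.rec ⟨id, strictMono_id⟩ (fun n s => ⟨s.1 ∘ ρ n s.1 s.2, s.2.comp (hρ n s.1 s.2)⟩) n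
  have hnested : ∀ n k, n ≤ k → ∀ j, ∃ m, j ≤ m ∧ (σ k).1 j = (σ n).1 m := by
    intro n k hnk
    induction k, hnk using Nat.le_induction with
    | base => exact fun j => ⟨j, le_rfl, rfl⟩
    | succ k _ ih =>
      intro j
      obtain ⟨m, hm, hkm⟩ := ih (ρ k (σ k).1 (σ k).2 j)
      exact ⟨m, (hρ k _ _).le_apply.trans hm, hkm⟩
  refine ⟨fun k => (σ k).1 k, strictMono_nat_of_lt_succ fun k => ?_, fun i => ?_⟩
  · exact (σ k).2 (Nat.lt_succ_self k |>.trans_le (hρ k _ _).le_apply)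
  · have hle : map (fun k => (σ k).1 k) atTop ≤ map (σ (e i + 1)).1 atTop := by
      intro s hs
      obtain ⟨N, hN⟩ := mem_atTop_sets.1 (mem_map.1 hs)
      refine mem_map.2 (mem_atTop_sets.2 ⟨max (e i + 1) N, fun k hk => ?_⟩)
      obtain ⟨m, hkm, hm⟩ := hnested _ k (le_of_max_le_left hk) k
      exact (congrArg (· ∈ s) hm).mpr (hN m ((le_of_max_le_right hk).trans hkm))
    exact hQ i hle (hQρ _ _ _ i rfl)

theorem exists_strictMono_tendsto_atTop_of_notMem_closure {X : Type*} [TopologicalSpace X]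
    [SecondCountableTopology X] (f : ℕ → X → ℝ) :
    ∃ τ : ℕ → ℕ, StrictMono τ ∧
      ∀ y ∉ closure {a | IsBoundedUnder (· ≤ ·) atTop fun k => f (τ k) a},
        Tendsto (fun k => f (τ k) y) atTop atTop := by
  have := (TopologicalSpace.countable_countableBasis X).to_subtype
  obtain ⟨τ, hτ, hQ⟩ := exists_strictMono_forall_of_subseq
    (Q := fun (U : TopologicalSpace.countableBasis X) F =>
      (∀ y ∈ (U : Set X), Tendsto (f · y) F atTop) ∨
        ∃ a ∈ (U : Set X), IsBoundedUnder (· ≤ ·) F (f · a))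
    (fun U F G hFG => Or.imp (fun h y hy => (h y hy).mono_left hFG)
      fun ⟨a, ha, hb⟩ => ⟨a, ha, hb.mono hFG⟩)
    (fun U σ _ => by
      by_cases h : ∀ y ∈ (U : Set X), Tendsto (fun k => f (σ k) y) atTop atTop
      · exact ⟨id, strictMono_id, Or.inl fun y hy => tendsto_map'_iff.2 (h y hy)⟩
      push Not at h
      obtain ⟨y, hyU, hy⟩ := h
      obtain ⟨M, hM⟩ := not_forall.1 (mt tendsto_atTop.2 hy)
      obtain ⟨ρ, hρ, hρM⟩ := extraction_of_frequently_atTop (not_eventually.1 hM)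
      exact ⟨ρ, hρ, Or.inr ⟨y, hyU, M, eventually_map.2 (eventually_map.2
        (Eventually.of_forall fun k => (not_le.1 (hρM k)).le))⟩⟩)
  refine ⟨τ, hτ, fun y hy => ?_⟩
  by_contra hdiv
  refine hy ((TopologicalSpace.isBasis_countableBasis X).mem_closure_iff.2 fun U hU hyU => ?_)
  rcases hQ ⟨U, hU⟩ with h | ⟨a, haU, ha⟩
  · exact absurd (tendsto_map'_iff.1 (h y hyU)) hdiv
  · exact ⟨a, haU, ha⟩

theorem exists_strictMono_tendsto_of_isBounded {ι X : Type*} [Countable ι] [PseudoMetricSpace X]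
    [ProperSpace X] (u : ι → ℕ → X)
    (hu : ∀ i, ∃ s, Bornology.IsBounded s ∧ ∀ᶠ n in atTop, u i n ∈ s) :
    ∃ τ : ℕ → ℕ, StrictMono τ ∧ ∀ i, ∃ a, Tendsto (u i ∘ τ) atTop (𝓝 a) := by
  obtain ⟨τ, hτ, hlim⟩ := exists_strictMono_forall_of_subseq
    (Q := fun i F => ∃ a, Tendsto (u i) F (𝓝 a))
    (fun i F G hFG ⟨a, ha⟩ => ⟨a, ha.mono_left hFG⟩)
    (fun i σ hσ => by
      obtain ⟨s, hs, hus⟩ := hu i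
      obtain ⟨a, -, ρ, hρ, ha⟩ :=
        tendsto_subseq_of_frequently_bounded hs (hσ.tendsto_atTop.eventually hus).frequently
      exact ⟨ρ, hρ, a, tendsto_map'_iff.2 ha⟩)
  exact ⟨τ, hτ, fun i => (hlim i).imp fun a => tendsto_map'_iff.1⟩

theorem convex_setOf_isBoundedUnder {E ι : Type*} [AddCommGroup E] [Module ℝ E] {l : Filter ι}
    {f : ι → E → ℝ} (hf : ∀ i, ConvexOn ℝ univ (f i)) :
    Convex ℝ {a | IsBoundedUnder (· ≤ ·) l fun i => f i a} := by
  rintro a ⟨Ma, ha⟩ b ⟨Mb, hb⟩ s t hs ht hst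
  refine ⟨max Ma Mb, eventually_map.2 ?_⟩
  filter_upwards [eventually_map.1 ha, eventually_map.1 hb] with i hai hbi
  calc f i (s • a + t • b) ≤ s * f i a + t * f i b := (hf i).2 trivial trivial hs ht hst
    _ ≤ s * max Ma Mb + t * max Ma Mb := by gcongr <;> simp [hai, hbi]
    _ = max Ma Mb := by rw [← add_mul, hst, one_mul]

theorem preimage_intrinsicInterior_subset_interior {X E : Type*} [TopologicalSpace X]
    [NormedAddCommGroup E] [NormedSpace ℝ E] {s : Set E} {e : X → E} (he : Continuous e)
    (hes : ∀ x, e x ∈ affineSpan ℝ s) :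
    e ⁻¹' intrinsicInterior ℝ s ⊆ interior (e ⁻¹' s) := by
  rintro x ⟨z, hz, hzx⟩
  let e' : X → affineSpan ℝ s := fun x => ⟨e x, hes x⟩
  have hopen : IsOpen (e' ⁻¹' interior ((↑) ⁻¹' s : Set (affineSpan ℝ s))) :=
    isOpen_interior.preimage (he.subtype_mk hes)
  have hsub : e' ⁻¹' interior ((↑) ⁻¹' s : Set (affineSpan ℝ s)) ⊆ e ⁻¹' s :=
    fun y hy => (interior_subset hy : e' y ∈ ((↑) ⁻¹' s : Set (affineSpan ℝ s)))
  have hxz : e' x = z := Subtype.ext (by exact hzx.symm)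
  exact interior_maximal hsub hopen (by rw [mem_preimage, hxz]; exact hz)

theorem Convex.interior_closure_eq_interior {E : Type*} [NormedAddCommGroup E] [NormedSpace ℝ E]
    [FiniteDimensional ℝ E] {s : Set E} (hs : Convex ℝ s) : interior (closure s) = interior s := by
  rcases (interior s).eq_empty_or_nonempty with h | h
  · rw [h, ← not_nonempty_iff_eq_empty, hs.closure.interior_nonempty_iff_affineSpan_eq_top]
    rw [← not_nonempty_iff_eq_empty, hs.interior_nonempty_iff_affineSpan_eq_top] at h
    refine fun htop => h (top_le_iff.1 (htop ▸ affineSpan_le.2 ?_))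
    exact (closure_minimal (subset_affineSpan ℝ s) (affineSpan ℝ s).closed_of_finiteDimensional)
  · exact hs.interior_closure_eq_interior_of_nonempty_interior h

section ConvexFamily

variable {E ι : Type*} [NormedAddCommGroup E] [NormedSpace ℝ E] [FiniteDimensional ℝ E]
  {f : ι → E → ℝ} {A : Set E} {x : E}

theorem exists_forall_le_of_mem_interior (hf : ∀ i, ConvexOn ℝ univ (f i))
    (hA : ∀ a ∈ A, BddAbove (range fun i => f i a)) (hx : x ∈ interior A) :
    ∃ r > 0, ∃ M, ∀ i, ∀ y ∈ Metric.ball x r, f i y ≤ M := by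
  obtain ⟨b, hxb, hbA⟩ :=
    exists_mem_interior_convexHull_affineBasis (mem_interior_iff_mem_nhds.1 hx)
  obtain ⟨M, hM⟩ : BddAbove (⋃ j, range fun i => f i (b j)) :=
    (finite_univ.bddAbove_biUnion.2 fun j _ => hA _ (hbA (subset_convexHull ℝ _ ⟨j, rfl⟩))).mono
      (by simp)
  obtain ⟨r, hr, hball⟩ := Metric.isOpen_iff.1 isOpen_interior x hxb
  refine ⟨r, hr, M, fun i y hy => ?_⟩
  obtain ⟨_, ⟨j, rfl⟩, hyj⟩ :=
    (hf i).exists_ge_of_mem_convexHull (subset_univ _) (interior_subset (hball hy))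
  exact hyj.trans (hM (mem_iUnion.2 ⟨j, i, rfl⟩))

theorem exists_lipschitzOnWith_of_mem_interior (hf : ∀ i, ConvexOn ℝ univ (f i))
    (h0 : ∀ i y, 0 ≤ f i y) (hA : ∀ a ∈ A, BddAbove (range fun i => f i a))
    (hx : x ∈ interior A) : ∃ K, ∃ U ∈ 𝓝 x, ∀ i, LipschitzOnWith K (f i) U := by
  obtain ⟨r, hr, M, hM⟩ := exists_forall_le_of_mem_interior hf hA hx
  refine ⟨(2 * M / (r / 2)).toNNReal, Metric.ball x (r - r / 2),
    Metric.ball_mem_nhds x (by linarith), fun i => ?_⟩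
  refine ((hf i).subset (subset_univ _) (convex_ball x r)).lipschitzOnWith_of_abs_le
    (half_pos hr) fun a ha => ?_
  rw [abs_of_nonneg (h0 i a)]
  exact hM i a ha

end ConvexFamily

theorem uniformCauchySeqOnFilter_of_lipschitzOnWith {X : Type*} [PseudoMetricSpace X]
    {F : ℕ → X → ℝ} {U : Set X} {x : X} {K : ℝ≥0} (hU : U ∈ 𝓝 x)
    (hF : ∀ k, LipschitzOnWith K (F k) U) (hx : x ∈ closure {y | CauchySeq fun k => F k y}) :
    UniformCauchySeqOnFilter F atTop (𝓝 x) := by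
  intro u hu
  obtain ⟨ε, hε, hεu⟩ := Metric.mem_uniformity_dist.1 hu
  set δ := ε / (8 * (K + 1)) with hδ
  have hδ0 : 0 < δ := by positivity
  have hKδ : K * (2 * δ) ≤ ε / 4 :=
    calc K * (2 * δ) = ε / 4 * (K / (K + 1)) := by rw [hδ]; field_simp; ring
      _ ≤ ε / 4 := mul_le_of_le_one_right (by positivity) ((div_le_one (by positivity)).2 (by simp))
  obtain ⟨d, ⟨hdx, hdU⟩, hd⟩ :=
    mem_closure_iff_nhds.1 hx _ (inter_mem (Metric.ball_mem_nhds x hδ0) hU)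
  have hdF : ∀ᶠ p in atTop ×ˢ atTop, dist (F p.1 d) (F p.2 d) < ε / 2 := by
    rw [prod_atTop_atTop_eq]
    exact (tendsto_order.1 (cauchySeq_iff_tendsto_dist_atTop_0.1 hd)).2 _ (by positivity)
  filter_upwards [hdF.prod_mk (inter_mem (Metric.ball_mem_nhds x hδ0) hU)]
  rintro ⟨⟨m, n⟩, y⟩ ⟨hmn, hyx, hyU⟩
  have hyd : dist y d < 2 * δ := by
    rw [Metric.mem_ball] at hyx hdx
    linarith [dist_triangle_right y d x]
  have hlip : ∀ k, dist (F k y) (F k d) ≤ ε / 4 := fun k =>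
    ((hF k).dist_le_mul y hyU d hdU).trans
      ((mul_le_mul_of_nonneg_left hyd.le K.2).trans hKδ)
  apply hεu
  calc dist (F m y) (F n y) ≤ dist (F m y) (F m d) + dist (F m d) (F n d) + dist (F n d) (F n y) :=
        dist_triangle4 _ _ _ _
    _ < ε / 4 + ε / 2 + ε / 4 := by
        have := hlip n; rw [dist_comm] at this
        linarith [hlip m]
    _ = ε := by ring

theorem tendstoLocallyUniformlyOn_limUnder {X β : Type*} [TopologicalSpace X] [UniformSpace β]
    [CompleteSpace β] [Nonempty β] {F : ℕ → X → β} {s : Set X}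
    (hF : ∀ x ∈ s, UniformCauchySeqOnFilter F atTop (𝓝 x)) :
    TendstoLocallyUniformlyOn F (fun y => limUnder atTop (F · y)) atTop s := by
  rw [tendstoLocallyUniformlyOn_iff_filter]
  intro x hx
  refine ((hF x hx).mono_right nhdsWithin_le_nhds).tendstoUniformlyOnFilter_of_tendsto ?_
  filter_upwards [self_mem_nhdsWithin] with y hy
  have : UniformCauchySeqOn F atTop {y} := by
    rw [uniformCauchySeqOn_iff_uniformCauchySeqOnFilter, principal_singleton]
    exact (hF y hy).mono_right (pure_le_nhds y)
  exact tendsto_nhds_limUnder (cauchySeq_tendsto_of_complete (this.cauchySeq (mem_singleton y)))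

section ConvexSequence

variable {E : Type*} [NormedAddCommGroup E] [NormedSpace ℝ E] [FiniteDimensional ℝ E]
  {f : ℕ → E → ℝ} {A D : Set E}

theorem tendstoLocallyUniformlyOn_interior_of_convexOn (hf : ∀ k, ConvexOn ℝ univ (f k))
    (h0 : ∀ k y, 0 ≤ f k y) (hA : ∀ a ∈ A, BddAbove (range fun k => f k a))
    (hAD : A ⊆ closure D) (hD : ∀ y ∈ D, CauchySeq fun k => f k y) :
    TendstoLocallyUniformlyOn f (fun y => limUnder atTop (f · y)) atTop (interior A) :=
  tendstoLocallyUniformlyOn_limUnder fun _ hx =>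
    let ⟨_, _, hU, hlip⟩ := exists_lipschitzOnWith_of_mem_interior hf h0 hA hx
    uniformCauchySeqOnFilter_of_lipschitzOnWith hU hlip
      (closure_mono hD (hAD (interior_subset hx)))

theorem tendstoUniformlyOn_of_subset_intrinsicInterior_closure (hf : ∀ k, ConvexOn ℝ univ (f k))
    (h0 : ∀ k y, 0 ≤ f k y) (hAc : Convex ℝ A) (hA : ∀ a ∈ A, BddAbove (range fun k => f k a))
    (hDA : D ⊆ A) (hAD : A ⊆ closure D) (hD : ∀ y ∈ D, CauchySeq fun k => f k y)
    {K : Set E} (hK : K ⊆ intrinsicInterior ℝ (closure A)) (hKc : IsCompact K) :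
    TendstoUniformlyOn f (fun y => limUnder atTop (f · y)) atTop K := by
  rcases A.eq_empty_or_nonempty with rfl | ⟨x₀, hx₀⟩
  · simp only [closure_empty, intrinsicInterior_empty, subset_empty_iff] at hK
    exact hK ▸ tendstoUniformlyOn_empty
  -- identify the affine span `P` of `closure A` with its direction through `v ↦ v + x₀`
  set P := affineSpan ℝ (closure A)
  have hx₀P : x₀ ∈ P := subset_affineSpan ℝ _ (subset_closure hx₀)
  let e : P.direction →ᵃⁱ[ℝ] E :=
    ⟨P.direction.subtype.toAffineMap + AffineMap.const ℝ _ x₀, fun v => by simp⟩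
  have he : ∀ v, e v = v + x₀ := fun v => rfl
  have heP : ∀ v, e v ∈ P := fun v => P.vadd_mem_of_mem_direction v.2 hx₀P
  have hPe : (P : Set E) ⊆ range e := fun y hy =>
    ⟨⟨y - x₀, P.vsub_mem_direction hy hx₀P⟩, (he _).trans (sub_add_cancel y x₀)⟩
  have hAe : A ⊆ range e := subset_closure.trans ((subset_affineSpan ℝ _).trans hPe)
  have hclosure : ∀ s ⊆ range e, closure (e ⁻¹' s) = e ⁻¹' closure s := fun s hs => by
    rw [e.isometry.isEmbedding.isInducing.closure_eq_preimage_closure_image,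
      image_preimage_eq_of_subset hs]
  have hloc := tendstoLocallyUniformlyOn_interior_of_convexOn (f := fun k => f k ∘ e)
    (A := e ⁻¹' A) (D := e ⁻¹' D) (fun k => by simpa using (hf k).comp_affineMap e.toAffineMap)
    (fun k v => h0 k (e v)) (fun a ha => hA _ ha)
    (by rw [hclosure D (hDA.trans hAe)]; exact preimage_mono hAD) (fun y hy => hD _ hy)
  have hK' : e ⁻¹' K ⊆ interior (e ⁻¹' A) :=
    calc e ⁻¹' K ⊆ e ⁻¹' intrinsicInterior ℝ (closure A) := preimage_mono hK
      _ ⊆ interior (e ⁻¹' closure A) :=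
        preimage_intrinsicInterior_subset_interior e.continuous heP
      _ = interior (e ⁻¹' A) := by
        have : Convex ℝ (e ⁻¹' A) := hAc.affine_preimage e.toAffineMap
        rw [← hclosure A hAe, this.interior_closure_eq_interior]
  have hunif := (tendstoLocallyUniformlyOn_iff_tendstoUniformlyOn_of_compact
    (e.isometry.isClosedEmbedding.isCompact_preimage hKc)).1 (hloc.mono hK')
  have hKe : K ⊆ range e :=
    hK.trans (intrinsicInterior_subset.trans ((subset_affineSpan ℝ _).trans hPe))
  rw [← image_preimage_eq_of_subset hKe]
  intro u hu
  filter_upwards [hunif u hu] with n hn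
  rintro _ ⟨v, hv, rfl⟩
  exact hn v hv

end ConvexSequence

theorem stmt18_general {d : ℕ} (ψ : ℕ → Rd d → ℝ)
    (hconv : ∀ n, ConvexOn ℝ univ (ψ n))
    (hnonneg : ∀ n y, 0 ≤ ψ n y) :
    ∃ Clim : Set (Rd d), IsClosed Clim ∧ Convex ℝ Clim ∧
      ∃ nk : ℕ → ℕ, StrictMono nk ∧
        ∃ ψlim : Rd d → ℝ,
          (∀ y ∈ intrinsicInterior ℝ Clim,
            Tendsto (fun k => ψ (nk k) y) atTop (𝓝 (ψlim y))) ∧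
          (∀ K : Set (Rd d), K ⊆ intrinsicInterior ℝ Clim → IsCompact K →
            TendstoUniformlyOn (fun k => ψ (nk k)) ψlim atTop K) ∧
          (∀ y ∉ Clim, Tendsto (fun k => ψ (nk k) y) atTop atTop) := by
  obtain ⟨τ, hτ, hdiv⟩ := exists_strictMono_tendsto_atTop_of_notMem_closure ψ
  set A := {a | IsBoundedUnder (· ≤ ·) atTop fun k => ψ (τ k) a}
  have hAc : Convex ℝ A := convex_setOf_isBoundedUnder fun k => hconv (τ k)
  obtain ⟨D, hDA, hDc, hAD⟩ :=
    (TopologicalSpace.IsSeparable.of_separableSpace A).exists_countable_dense_subset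
  have := hDc.to_subtype
  obtain ⟨ρ, hρ, hlim⟩ := exists_strictMono_tendsto_of_isBounded (fun (a : D) k => ψ (τ k) a)
    fun a => by
      obtain ⟨M, hM⟩ := hDA a.2
      exact ⟨Icc 0 M, Metric.isBounded_Icc 0 M,
        (eventually_map.1 hM).mono fun k hk => ⟨hnonneg _ _, hk⟩⟩
  have hunif : ∀ K ⊆ intrinsicInterior ℝ (closure A), IsCompact K →
      TendstoUniformlyOn (fun k => ψ (τ (ρ k))) (fun y => limUnder atTop fun k => ψ (τ (ρ k)) y)
        atTop K := fun K hK hKc =>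
    tendstoUniformlyOn_of_subset_intrinsicInterior_closure (fun k => hconv _) (fun k => hnonneg _)
      hAc (fun a ha => (hρ.tendsto_atTop.isBoundedUnder_comp ha).bddAbove_range) hDA hAD
      (fun y hy => let ⟨_, h⟩ := hlim ⟨y, hy⟩; h.cauchySeq) hK hKc
  refine ⟨closure A, isClosed_closure, hAc.closure, τ ∘ ρ, hτ.comp hρ, _,
    fun y hy => ?_, hunif, fun y hy => (hdiv y hy).comp hρ.tendsto_atTop⟩
  exact (hunif {y} (singleton_subset_iff.2 hy) isCompact_singleton).tendsto_at (mem_singleton y)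

/-- **Subsequence limits of nonnegative convex functions (Lemma C.1).** -/
theorem stmt18 {d : ℕ} (hd : 1 ≤ d) (ψ : ℕ → Rd d → ℝ)
    (hlsc : ∀ n, LowerSemicontinuous (ψ n)) (hconv : ∀ n, ConvexOn ℝ univ (ψ n))
    (hnonneg : ∀ n y, 0 ≤ ψ n y) :
    ∃ Clim : Set (Rd d), IsClosed Clim ∧ Convex ℝ Clim ∧
      ∃ nk : ℕ → ℕ, StrictMono nk ∧
        ∃ ψlim : Rd d → ℝ,
          (∀ y ∈ intrinsicInterior ℝ Clim,
            Tendsto (fun k => ψ (nk k) y) atTop (𝓝 (ψlim y))) ∧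
          (∀ K : Set (Rd d), K ⊆ intrinsicInterior ℝ Clim → IsCompact K →
            TendstoUniformlyOn (fun k => ψ (nk k)) ψlim atTop K) ∧
          (∀ y ∉ Clim, Tendsto (fun k => ψ (nk k) y) atTop atTop) :=
  stmt18_general ψ hconv hnonneg
end
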